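/- arXiv:1403.3810 — 9 statements merged into one kernel-verified Lean document; each statement's English description precedes it below -/
import Mathlib

section
/- Let h be a natural number such that the basis is admissible for h, i.e. X(h) ≥ a_3. Write X(h) = (k+1)*a_3 + Y with k an integer and 0 ≤ Y < a_3. Then k ≥ 0, Y < a_3 − 1, h > k, and there exists p ≤ k such that SG(A, h−k, p) is a stride generator, y = Y + 1 is a break of SG(A, h−k, p), and y is either a canonical break or has break order > k + 1. -/
/-- `x` has an `n`-generation of order `i` (w.r.t. the basis `{1, a2, a3}`). -/
def HasGen (a2 a3 : ℤ) (n i : ℕ) (x : ℤ) : Prop :=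
  ∃ c1 c2 : ℕ, x + (i : ℤ) * a3 = (c2 : ℤ) * a2 + (c1 : ℤ) ∧ c1 + c2 ≤ n + i

/-- `SG(A, n, p)` is a stride generator. -/
def IsSG (a2 a3 : ℤ) (n p : ℕ) : Prop :=
  (∀ x : ℤ, 0 ≤ x → x < a3 → ∃ i : ℕ, i ≤ p ∧ HasGen a2 a3 n i x) ∧
  (∃ x : ℤ, 0 ≤ x ∧ x < a3 ∧ ∀ i : ℕ, i < p → ¬ HasGen a2 a3 n i x) ∧
  (∃ y : ℤ, 0 ≤ y ∧ y < a3 ∧ ∀ i : ℕ, i ≤ p + 1 → ¬ HasGen a2 a3 (n - 1) i y)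

/-- `y` is a break of the stride generator `SG(A, n, p)`. -/
def IsBreak (a2 a3 : ℤ) (n p : ℕ) (y : ℤ) : Prop :=
  0 ≤ y ∧ y < a3 ∧ ∀ i : ℕ, i ≤ p + 1 → ¬ HasGen a2 a3 (n - 1) i y

/-- `y` is a canonical break: it has no `(n-1)`-generation of any order. -/
def IsCanonicalBreak (a2 a3 : ℤ) (n : ℕ) (y : ℤ) : Prop :=
  ∀ i : ℕ, ¬ HasGen a2 a3 (n - 1) i y

/-- `y` has break order `q`: `q` is the smallest order of an `(n-1)`-generation of `y`. -/
def HasBreakOrder (a2 a3 : ℤ) (n : ℕ) (y : ℤ) (q : ℕ) : Prop :=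
  HasGen a2 a3 (n - 1) q y ∧ ∀ i : ℕ, i < q → ¬ HasGen a2 a3 (n - 1) i y

/-- A canonical stride generator: all of its breaks are canonical. -/
def IsCanonicalSG (a2 a3 : ℤ) (n p : ℕ) : Prop :=
  IsSG a2 a3 n p ∧ ∀ y : ℤ, IsBreak a2 a3 n p y → IsCanonicalBreak a2 a3 n y

/-- A fundamental stride generator: no stride generator for `A` has larger `n`. -/
def IsFundamentalSG (a2 a3 : ℤ) (n p : ℕ) : Prop :=
  IsSG a2 a3 n p ∧ ∀ n' p' : ℕ, IsSG a2 a3 n' p' → n' ≤ n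

/-- Start of the thread `T(e, i)`. -/
def thrStr (a2 a3 : ℤ) (e i : ℕ) : ℤ := (e : ℤ) * a2 - (i : ℤ) * a3

/-- End of the thread `T(e, i)` (for parameter `n`). -/
def thrEnd (a2 a3 : ℤ) (n e i : ℕ) : ℤ := thrStr a2 a3 e i + ((n : ℤ) + (i : ℤ)) - (e : ℤ)

/-- The value `x` is covered by the thread `T(e, i)`. -/
def ThrCoversVal (a2 a3 : ℤ) (n e i : ℕ) (x : ℤ) : Prop :=
  thrStr a2 a3 e i ≤ x ∧ x ≤ thrEnd a2 a3 n e i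

/-- The thread `T(e1, i1)` covers the thread `T(e2, i2)`. -/
def ThrCoversThr (a2 a3 : ℤ) (n e1 i1 e2 i2 : ℕ) : Prop :=
  thrStr a2 a3 e1 i1 ≤ thrStr a2 a3 e2 i2 ∧ thrEnd a2 a3 n e2 i2 ≤ thrEnd a2 a3 n e1 i1

/-- The thread `T(e, i)` has positive length and appears in the diagram:
it covers at least one value in `[0, a3)`. -/
def ThrAppears (a2 a3 : ℤ) (n e i : ℕ) : Prop :=
  e ≤ n + i ∧ ∃ x : ℤ, 0 ≤ x ∧ x < a3 ∧ ThrCoversVal a2 a3 n e i x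

/-- `x` has an `h`-representation with respect to the basis `{1, a2, a3}`. -/
def HasRep (a2 a3 : ℤ) (h : ℕ) (x : ℤ) : Prop :=
  ∃ c1 c2 c3 : ℕ, x = (c3 : ℤ) * a3 + (c2 : ℤ) * a2 + (c1 : ℤ) ∧ c1 + c2 + c3 ≤ h

/-- `X` is the `h`-range: every `0 ≤ x ≤ X` has an `h`-representation and `X + 1` does not. -/
def IsHRange (a2 a3 : ℤ) (h : ℕ) (X : ℤ) : Prop :=
  0 ≤ X ∧ (∀ x : ℤ, 0 ≤ x → x ≤ X → HasRep a2 a3 h x) ∧ ¬ HasRep a2 a3 h (X + 1)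

/-!
An `h`-representation of `j * a3 + x` with `0 ≤ x < a3` uses `a3` at most `j` times, and
trading the missing `j - c3` copies of `a3` for the order of a generation turns it into an
`(h - j)`-generation of `x` of order at most `j`, and conversely. Reading the `h`-range
`X = (k + 1) * a3 + Y` through this dictionary: every `x < a3` lies below `k * a3 + x ≤ X`, so it
has an `(h - k)`-generation of order `≤ k`, while `X + 1 = (k + 1) * a3 + (Y + 1)` has no
`h`-representation, so `Y + 1` has no `(h - k - 1)`-generation of order `≤ k + 1`. The least
order `p` that generates all of `[0, a3)` then gives the stride generator.
-/

variable {a2 a3 : ℤ}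

lemma HasRep.le_mul {h : ℕ} {x : ℤ} (ha2 : 0 ≤ a2) (ha23 : a2 ≤ a3) (ha3 : 1 ≤ a3)
    (hx : HasRep a2 a3 h x) : x ≤ h * a3 := by
  obtain ⟨c1, c2, c3, rfl, hle⟩ := hx
  have hsum : ((c1 + c2 + c3 : ℕ) : ℤ) ≤ h := by exact_mod_cast hle
  push_cast at hsum
  nlinarith [mul_le_mul_of_nonneg_left ha23 (Int.natCast_nonneg c2),
    mul_le_mul_of_nonneg_left ha3 (Int.natCast_nonneg c1)]

lemma hasRep_natCast_mul {h j : ℕ} (hj : j ≤ h) : HasRep a2 a3 h (j * a3) :=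
  ⟨0, 0, j, by ring, by omega⟩

lemma HasRep.exists_hasGen {h j : ℕ} {x : ℤ} (ha2 : 0 ≤ a2) (ha3 : 0 ≤ a3) (hx : x < a3)
    (hrep : HasRep a2 a3 h (j * a3 + x)) : ∃ i ≤ j, HasGen a2 a3 (h - j) i x := by
  obtain ⟨c1, c2, c3, heq, hle⟩ := hrep
  have hc3 : c3 ≤ j := by
    by_contra! hc
    have hc' : ((j + 1 : ℕ) : ℤ) ≤ c3 := by exact_mod_cast hc
    push_cast at hc'
    nlinarith [mul_le_mul_of_nonneg_right hc' ha3, mul_nonneg (Int.natCast_nonneg c2) ha2,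
      Int.natCast_nonneg c1]
  refine ⟨j - c3, by omega, c1, c2, ?_, by omega⟩
  rw [Nat.cast_sub hc3]
  linarith

lemma HasGen.hasRep {h j i : ℕ} {x : ℤ} (hj : j ≤ h) (hi : i ≤ j)
    (hgen : HasGen a2 a3 (h - j) i x) : HasRep a2 a3 h (j * a3 + x) := by
  obtain ⟨c1, c2, heq, hle⟩ := hgen
  refine ⟨c1, c2, j - i, ?_, by omega⟩
  rw [Nat.cast_sub hi]
  linarith

lemma IsBreak.mono {n p K : ℕ} {y : ℤ} (hy : IsBreak a2 a3 n K y) (hp : p ≤ K) :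
    IsBreak a2 a3 n p y :=
  ⟨hy.1, hy.2.1, fun i hi => hy.2.2 i (by omega)⟩

lemma IsBreak.isCanonicalBreak_or_hasBreakOrder {n p : ℕ} {y : ℤ} (hy : IsBreak a2 a3 n p y) :
    IsCanonicalBreak a2 a3 n y ∨ ∃ q : ℕ, p + 1 < q ∧ HasBreakOrder a2 a3 n y q := by
  classical
  by_cases hgen : ∃ i, HasGen a2 a3 (n - 1) i y
  · right
    refine ⟨Nat.find hgen, ?_, Nat.find_spec hgen, fun i hi => Nat.find_min hgen hi⟩
    by_contra! hq
    exact hy.2.2 _ hq (Nat.find_spec hgen)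
  · left
    exact fun i hi => hgen ⟨i, hi⟩

lemma exists_isSG_isBreak {n K : ℕ} {y : ℤ}
    (hgen : ∀ x : ℤ, 0 ≤ x → x < a3 → ∃ i ≤ K, HasGen a2 a3 n i x)
    (hy : IsBreak a2 a3 n K y) : ∃ p ≤ K, IsSG a2 a3 n p ∧ IsBreak a2 a3 n p y := by
  classical
  have hex : ∃ p : ℕ, ∀ x : ℤ, 0 ≤ x → x < a3 → ∃ i ≤ p, HasGen a2 a3 n i x := ⟨K, hgen⟩
  have hpK : Nat.find hex ≤ K := Nat.find_le hgen
  have hbreak := hy.mono hpK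
  refine ⟨Nat.find hex, hpK, ⟨Nat.find_spec hex, ?_, y, hbreak⟩, hbreak⟩
  rcases Nat.eq_zero_or_pos (Nat.find hex) with hp0 | hp0
  · exact ⟨0, le_rfl, by linarith [hy.1, hy.2.1], fun i hi => by omega⟩
  · have hmin := Nat.find_min hex (show Nat.find hex - 1 < Nat.find hex by omega)
    push Not at hmin
    obtain ⟨x, hx0, hx1, hx⟩ := hmin
    exact ⟨x, hx0, hx1, fun i hi => hx i (by omega)⟩

/-- Lemma 11: every admissible `h`-basis has an underlying stride generator. -/
theorem stmt1 (a2 a3 : ℤ) (ha2 : 1 < a2) (ha3 : a2 < a3)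
    (h : ℕ) (X : ℤ) (hX : IsHRange a2 a3 h X) (hadm : a3 ≤ X)
    (k Y : ℤ) (hkY : X = (k + 1) * a3 + Y) (hY0 : 0 ≤ Y) (hY1 : Y < a3) :
    0 ≤ k ∧ Y < a3 - 1 ∧ k < (h : ℤ) ∧
    ∃ p : ℕ, (p : ℤ) ≤ k ∧ IsSG a2 a3 (h - k.toNat) p ∧
      IsBreak a2 a3 (h - k.toNat) p (Y + 1) ∧
      (IsCanonicalBreak a2 a3 (h - k.toNat) (Y + 1) ∨
        ∃ q : ℕ, k + 1 < (q : ℤ) ∧ HasBreakOrder a2 a3 (h - k.toNat) (Y + 1) q) := by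
  obtain ⟨hX0, hrep, hnot⟩ := hX
  have hXh : X ≤ h * a3 := (hrep X hX0 le_rfl).le_mul (by omega) ha3.le (by omega)
  have hk0 : 0 ≤ k := by nlinarith
  lift k to ℕ using hk0
  simp only [Int.toNat_natCast]
  have hkh : k + 1 ≤ h := by
    suffices ((k + 1 : ℕ) : ℤ) ≤ h by exact_mod_cast this
    push_cast
    nlinarith
  have hY : Y < a3 - 1 := by
    by_contra! hY
    have hk2 : k + 2 ≤ h := by
      suffices ((k + 2 : ℕ) : ℤ) ≤ h by exact_mod_cast this
      push_cast
      nlinarith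
    exact hnot (by convert hasRep_natCast_mul (a2 := a2) hk2 using 1; push_cast; linarith)
  have hgen : ∀ x : ℤ, 0 ≤ x → x < a3 → ∃ i ≤ k, HasGen a2 a3 (h - k) i x := fun x hx0 hx1 =>
    (hrep _ (by nlinarith) (by nlinarith)).exists_hasGen (by omega) (by omega) hx1
  have hbreak : IsBreak a2 a3 (h - k) k (Y + 1) := by
    refine ⟨by omega, by omega, fun i hi hi' => hnot ?_⟩
    rw [Nat.sub_sub] at hi'
    convert hi'.hasRep hkh hi using 1
    push_cast
    linarith
  obtain ⟨p, hpk, hSG, hbreak_p⟩ := exists_isSG_isBreak hgen hbreak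
  refine ⟨by positivity, hY, by omega, p, by exact_mod_cast hpk, hSG, hbreak_p, ?_⟩
  exact_mod_cast hbreak.isCanonicalBreak_or_hasBreakOrder
end

section
/- If SG(A, n, p) is a stride generator and y is a break of it, then y ≥ a_3 − a_2. -/
/-! If `y < a3 - a2`, then `y + a2` lies in `[0, a3)` and so has an `n`-generation of order
`i ≤ p`; removing one summand `a2` from it (or `a2` ones, if it uses no `a2`) leaves an
`(n - 1)`-generation of `y` of the same order, so `y` is not a break. -/

theorem HasGen.pred_of_add_a2 {a2 a3 : ℤ} {n i : ℕ} {x : ℤ} (ha2 : 1 ≤ a2)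
    (hx : 0 ≤ x + i * a3) (h : HasGen a2 a3 n i (x + a2)) : HasGen a2 a3 (n - 1) i x := by
  obtain ⟨c1, c2, heq, hle⟩ := h
  rcases Nat.eq_zero_or_pos c2 with rfl | hc2
  · refine ⟨(c1 - a2).toNat, 0, ?_, ?_⟩ <;> push_cast at heq ⊢ <;> omega
  · refine ⟨c1, c2 - 1, ?_, by omega⟩
    push_cast [Nat.cast_sub hc2]
    linarith

theorem stmt6_general (a2 a3 : ℤ) (ha2 : 1 < a2)
    (n p : ℕ) (hsg : IsSG a2 a3 n p)
    (y : ℤ) (hbr : IsBreak a2 a3 n p y) :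
    a3 - a2 ≤ y := by
  by_contra! hlt
  obtain ⟨hy0, hya3, hbreak⟩ := hbr
  obtain ⟨i, hip, hgen⟩ := hsg.1 (y + a2) (by omega) (by omega)
  have hyi : 0 ≤ y + i * a3 := add_nonneg hy0 (mul_nonneg (Nat.cast_nonneg i) (by omega))
  exact hbreak i (by omega) (hgen.pred_of_add_a2 ha2.le hyi)

/-- Lemma 1: any break `y` of a stride generator satisfies `y ≥ a3 - a2`. -/
theorem stmt6 (a2 a3 : ℤ) (ha2 : 1 < a2) (ha3 : a2 < a3)
    (n p : ℕ) (hsg : IsSG a2 a3 n p)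
    (y : ℤ) (hbr : IsBreak a2 a3 n p y) :
    a3 - a2 ≤ y :=
  stmt6_general a2 a3 ha2 n p hsg y hbr
end

section
/- If SG(A, n, p) is a stride generator, then there exists an integer x with a_3 − a_2 ≤ x < a_3 such that x has an n-generation of order p but no n-generation of order < p. -/
/-!
Condition (B) of a stride generator is inherited upward in steps of `a2`: an `n`-generation of
order `i` of `x + a2` yields one of `x`, by dropping one copy of `a2` or, if there is none, by
lowering `c1` by `a2`. So a witness of (B) can be pushed up into the window `[a3 - a2, a3)`, and
there condition (A) forces its least generation order to be exactly `p`.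
-/

theorem HasGen.of_add {a2 a3 : ℤ} (ha2 : 0 ≤ a2) (ha3 : 0 ≤ a3) {n i : ℕ} {x : ℤ} (hx : 0 ≤ x)
    (h : HasGen a2 a3 n i (x + a2)) : HasGen a2 a3 n i x := by
  obtain ⟨c1, c2, heq, hle⟩ := h
  cases c2 with
  | zero =>
    have hnonneg : 0 ≤ x + i * a3 := add_nonneg hx (mul_nonneg i.cast_nonneg ha3)
    refine ⟨(x + i * a3).toNat, 0, ?_, ?_⟩
    · simp [Int.toNat_of_nonneg hnonneg]
    · push_cast at heq
      omega
  | succ c2 =>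
    refine ⟨c1, c2, ?_, by omega⟩
    push_cast at heq
    linarith

theorem HasGen.of_add_mul {a2 a3 : ℤ} (ha2 : 0 ≤ a2) (ha3 : 0 ≤ a3) {n i : ℕ} {x : ℤ}
    (hx : 0 ≤ x) (k : ℕ) (h : HasGen a2 a3 n i (x + k * a2)) : HasGen a2 a3 n i x := by
  induction k with
  | zero => simpa using h
  | succ k ih =>
    refine ih (HasGen.of_add ha2 ha3 (by positivity) ?_)
    convert h using 1
    push_cast
    ring

theorem Int.exists_add_mul_mem_Ico {d x b : ℤ} (hd : 0 < d) (hx : x < b) :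
    ∃ k : ℕ, b - d ≤ x + k * d ∧ x + k * d < b := by
  have hq : 0 ≤ (b - 1 - x) / d := Int.ediv_nonneg (by omega) hd.le
  refine ⟨((b - 1 - x) / d).toNat, ?_⟩
  rw [Int.toNat_of_nonneg hq]
  have hdiv := Int.emod_def (b - 1 - x) d
  have hlo := Int.emod_nonneg (b - 1 - x) hd.ne'
  have hhi := Int.emod_lt_of_pos (b - 1 - x) hd
  constructor <;> linarith

theorem stmt7_general (a2 a3 : ℤ) (ha2 : 1 < a2)
    (n p : ℕ) (hsg : IsSG a2 a3 n p) :
    ∃ x : ℤ, a3 - a2 ≤ x ∧ x < a3 ∧ HasGen a2 a3 n p x ∧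
      ∀ i : ℕ, i < p → ¬ HasGen a2 a3 n i x := by
  obtain ⟨hcover, ⟨x₀, hx₀, hx₀a3, hx₀B⟩, -⟩ := hsg
  obtain ⟨k, hlow, hhigh⟩ := Int.exists_add_mul_mem_Ico (by omega : 0 < a2) hx₀a3
  have hx : 0 ≤ x₀ + k * a2 := by positivity
  have hB : ∀ i < p, ¬ HasGen a2 a3 n i (x₀ + k * a2) := fun i hi h =>
    hx₀B i hi (h.of_add_mul (by omega) (by omega) hx₀ k)
  obtain ⟨i, hip, hgen⟩ := hcover _ hx hhigh
  obtain rfl : i = p := by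
    by_contra hne
    exact hB i (lt_of_le_of_ne hip hne) hgen
  exact ⟨_, hlow, hhigh, hgen, hB⟩

/-- Lemma 2: some `x ≥ a3 - a2` satisfies condition (B): it has an `n`-generation of order `p`
but none of smaller order. -/
theorem stmt7 (a2 a3 : ℤ) (ha2 : 1 < a2) (ha3 : a2 < a3)
    (n p : ℕ) (hsg : IsSG a2 a3 n p) :
    ∃ x : ℤ, a3 - a2 ≤ x ∧ x < a3 ∧ HasGen a2 a3 n p x ∧
      ∀ i : ℕ, i < p → ¬ HasGen a2 a3 n i x :=
  stmt7_general a2 a3 ha2 n p hsg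
end

section
/- In a stride generator SG(A, n, p), no thread of order ≤ p appearing in the diagram is covered by any distinct thread appearing in the diagram. -/
/-! An `n`-generation `x + i a₃ = c₂ a₂ + c₁` of order `i` says exactly that `x` lies on the
thread `T(c₂, i)`, and whether `T(e', i')` covers `T(e, i)` depends only on `e - e'` and `i - i'`.
Since `a₂ < a₃`, a distinct covering thread has lower order `i' < i`. Translating the pair by the
thread `T(g, p)` through the value `x` of condition (B) gives a thread of order `p - (i - i')`
covering `T(g, p)`, hence a generation of `x` of order `< p`: a contradiction. -/

theorem hasGen_iff_exists_thrCoversVal (a2 a3 : ℤ) (n i : ℕ) (x : ℤ) :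
    HasGen a2 a3 n i x ↔ ∃ e : ℕ, e ≤ n + i ∧ ThrCoversVal a2 a3 n e i x := by
  simp only [HasGen, ThrCoversVal, thrEnd, thrStr]
  constructor
  · rintro ⟨c1, c2, hx, hc⟩
    exact ⟨c2, by omega, by constructor <;> linarith⟩
  · rintro ⟨e, he, hstr, hend⟩
    obtain ⟨c1, hc1⟩ : ∃ c1 : ℕ, (c1 : ℤ) = x - (e * a2 - i * a3) :=
      ⟨(x - (e * a2 - i * a3)).toNat, Int.toNat_of_nonneg (by linarith)⟩
    exact ⟨c1, e, by linarith, by omega⟩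

theorem hasGen_zero_of_le {a2 a3 : ℤ} {n : ℕ} {x : ℤ} (hx0 : 0 ≤ x) (hxn : x ≤ n) :
    HasGen a2 a3 n 0 x :=
  ⟨x.toNat, 0, by simp [Int.toNat_of_nonneg hx0], by omega⟩

theorem ThrCoversVal.of_thrCoversThr {a2 a3 : ℤ} {n e i e' i' : ℕ} {x : ℤ}
    (hcov : ThrCoversThr a2 a3 n e' i' e i) (hx : ThrCoversVal a2 a3 n e i x) :
    ThrCoversVal a2 a3 n e' i' x :=
  ⟨hcov.1.trans hx.1, hx.2.trans hcov.2⟩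

theorem ThrCoversThr.le_add_of_le_add {a2 a3 : ℤ} {n e i e' i' : ℕ}
    (hcov : ThrCoversThr a2 a3 n e' i' e i) (he : e ≤ n + i) : e' ≤ n + i' := by
  obtain ⟨hstr, hend⟩ := hcov
  simp only [thrEnd] at hend
  omega

theorem thrCoversThr_iff (a2 a3 : ℤ) (n e i e' i' : ℕ) :
    ThrCoversThr a2 a3 n e' i' e i ↔
      ((i : ℤ) - i') * a3 ≤ ((e : ℤ) - e') * a2 ∧
        ((e : ℤ) - e') * (a2 - 1) ≤ ((i : ℤ) - i') * (a3 - 1) := by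
  simp only [ThrCoversThr, thrEnd, thrStr]
  constructor <;> rintro ⟨h1, h2⟩ <;> constructor <;> linarith

theorem ThrCoversThr.translate {a2 a3 : ℤ} {n e i e' i' g q g' q' : ℕ}
    (hcov : ThrCoversThr a2 a3 n e' i' e i) (he : e' + g = e + g') (hi : i' + q = i + q') :
    ThrCoversThr a2 a3 n g' q' g q := by
  have he : (g : ℤ) - g' = e - e' := by omega
  have hi : (q : ℤ) - q' = i - i' := by omega
  rw [thrCoversThr_iff] at hcov ⊢
  rwa [he, hi]

theorem ThrCoversThr.eq_of_le {a2 a3 : ℤ} (ha2 : 1 < a2) (ha3 : a2 < a3) {n e i e' i' : ℕ}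
    (hcov : ThrCoversThr a2 a3 n e' i' e i) (hi : i ≤ i') : e' = e ∧ i' = i := by
  obtain ⟨hstr, hend⟩ := (thrCoversThr_iff a2 a3 n e i e' i').1 hcov
  set f : ℤ := (e : ℤ) - e'
  set k : ℤ := (i : ℤ) - i'
  have hk : k ≤ 0 := by omega
  -- adding the two inequalities gives `k ≤ f`, and then `a₂ < a₃` forces `k = 0`
  have hkf : k ≤ f := by linarith
  have hk0 : k = 0 := by
    by_contra hk0
    have hgap : k * (a3 - a2) < 0 := mul_neg_of_neg_of_pos (by omega) (by linarith)
    linarith [mul_le_mul_of_nonneg_right hkf (by linarith : (0 : ℤ) ≤ a2 - 1)]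
  have hf0 : f = 0 := by
    rw [hk0] at hstr hend
    nlinarith
  omega

theorem ThrCoversVal.order_lt {a2 a3 : ℤ} {n e i : ℕ} {x : ℤ}
    (hx : ThrCoversVal a2 a3 n e i x) (hxn : (n : ℤ) < x) : (i : ℤ) * (a3 - 1) < e * (a2 - 1) := by
  obtain ⟨-, hend⟩ := hx
  simp only [thrEnd, thrStr] at hend
  linarith

theorem HasGen.of_thrCoversThr {a2 a3 : ℤ} (ha2 : 1 < a2) (ha3 : 1 ≤ a3) {n e i e' i' q q' : ℕ}
    {x : ℤ} (hxn : (n : ℤ) < x) (hgen : HasGen a2 a3 n q x)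
    (hcov : ThrCoversThr a2 a3 n e' i' e i) (hq : i' + q = i + q') : HasGen a2 a3 n q' x := by
  obtain ⟨g, hg, hxg⟩ := (hasGen_iff_exists_thrCoversVal a2 a3 n q x).1 hgen
  have hle : (e : ℤ) - e' < g := by
    refine lt_of_mul_lt_mul_right ?_ (by linarith : (0 : ℤ) ≤ a2 - 1)
    calc ((e : ℤ) - e') * (a2 - 1) ≤ ((i : ℤ) - i') * (a3 - 1) := ((thrCoversThr_iff ..).1 hcov).2
      _ ≤ q * (a3 - 1) := mul_le_mul_of_nonneg_right (by omega) (by linarith)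
      _ < g * (a2 - 1) := hxg.order_lt hxn
  obtain ⟨g', hg'⟩ : ∃ g', e' + g = e + g' := ⟨e' + g - e, by omega⟩
  have hcov' := hcov.translate hg' hq
  exact (hasGen_iff_exists_thrCoversVal a2 a3 n q' x).2
    ⟨g', hcov'.le_add_of_le_add hg, hxg.of_thrCoversThr hcov'⟩

/-- Lemma 6: no thread of order `≤ p` appearing in the diagram is covered by any other
(distinct) thread appearing in the diagram. -/
theorem stmt10 (a2 a3 : ℤ) (ha2 : 1 < a2) (ha3 : a2 < a3)
    (n p : ℕ) (hsg : IsSG a2 a3 n p) :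
    ∀ e i e' i' : ℕ, i ≤ p → ThrAppears a2 a3 n e i → ThrAppears a2 a3 n e' i' →
      (e', i') ≠ (e, i) → ¬ ThrCoversThr a2 a3 n e' i' e i := by
  intro e i e' i' hip _ _ hne hcov
  obtain ⟨hgen, ⟨x, hx0, hxa3, hno⟩, -⟩ := hsg
  have hi' : i' < i := by
    by_contra! h
    obtain ⟨rfl, rfl⟩ := hcov.eq_of_le ha2 ha3 h
    exact hne rfl
  have hxn : (n : ℤ) < x := by
    by_contra! h
    exact hno 0 (by omega) (hasGen_zero_of_le hx0 h)
  obtain ⟨q, hqp, hxq⟩ := hgen x hx0 hxa3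
  obtain rfl : q = p := by
    by_contra h
    exact hno q (by omega) hxq
  exact hno (q + i' - i) (by omega)
    (hxq.of_thrCoversThr ha2 (by linarith) hxn hcov (by omega))
end

section
/- Let SG(A, n, p) be a stride generator. If no thread of order p+1 appears in the diagram, or some thread of order p+1 appearing in the diagram is covered by a distinct thread appearing in the diagram, then SG(A, n, p) is canonical. -/
/-!
Let `y` be a break that does have an `(n-1)`-generation, and take one of minimal order `q`;
then `q ≥ p + 2`. Such a generation forces `(p+1) a₃ ≤ (n+p+1) a₂`, so the least nonnegative value
of `e a₂ - (p+1) a₃` is the start of a thread of order `p+1` appearing in the diagram.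
If instead a thread `T(e, p+1)` is covered by a distinct thread `T(e', i')`, then `i' < p+1` and
`e' < e`, and the covering says exactly that trading `e - e'` copies of `a₂` for `p+1-i'` copies
of `a₃` does not increase the weight of a generation. Applied to the greedy generation of `y`
(which uses at least `e` copies of `a₂`), this gives a generation of smaller order.
-/

lemma hasGen_of_int_coeffs {a2 a3 y : ℤ} {m q : ℕ} {c1 c2 : ℤ} (hc1 : 0 ≤ c1) (hc2 : 0 ≤ c2)
    (heq : y + (q : ℤ) * a3 = c2 * a2 + c1) (hle : c1 + c2 ≤ (m : ℤ) + q) :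
    HasGen a2 a3 m q y := by
  lift c1 to ℕ using hc1
  lift c2 to ℕ using hc2
  exact ⟨c1, c2, heq, by exact_mod_cast hle⟩

lemma ediv_add_emod_le_add {a c1 c2 : ℤ} (ha : 0 < a) (hc1 : 0 ≤ c1) :
    (c2 * a + c1) / a + (c2 * a + c1) % a ≤ c2 + c1 := by
  rw [add_comm (c2 * a), mul_comm, Int.add_mul_ediv_left _ _ ha.ne', Int.add_mul_emod_self_left]
  have hdiv := Int.mul_ediv_add_emod c1 a
  have hq : 0 ≤ c1 / a := Int.ediv_nonneg hc1 ha.le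
  nlinarith

lemma HasGen.order_mul_le {a2 a3 y : ℤ} {m Q i : ℕ} (ha2 : 1 ≤ a2) (ha3 : a2 ≤ a3) (hy : 0 ≤ y)
    (hiQ : i ≤ Q) (h : HasGen a2 a3 m Q y) : (i : ℤ) * a3 ≤ ((m : ℤ) + i) * a2 := by
  obtain ⟨c1, c2, heq, hle⟩ := h
  have hle' : (c1 : ℤ) + c2 ≤ (m : ℤ) + Q := by exact_mod_cast hle
  have hiQ' : (i : ℤ) ≤ Q := by exact_mod_cast hiQ
  have hc1 : (c1 : ℤ) ≤ c1 * a2 := le_mul_of_one_le_right c1.cast_nonneg ha2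
  have hQ : (Q : ℤ) * a3 ≤ ((m : ℤ) + Q) * a2 := by nlinarith
  nlinarith

lemma exists_thrAppears_of_mul_le {a2 a3 : ℤ} {n i : ℕ} (ha2 : 0 < a2) (ha3 : a2 ≤ a3)
    (h : (i : ℤ) * a3 ≤ ((n : ℤ) + i) * a2) : ∃ e : ℕ, ThrAppears a2 a3 n e i := by
  obtain ⟨k, ⟨hk0, hka⟩, -⟩ := existsUnique_add_zsmul_mem_Ico ha2 (-((i : ℤ) * a3)) 0
  simp only [smul_eq_mul, zero_add] at hk0 hka
  have hk : 0 ≤ k := by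
    by_contra! hk
    nlinarith [mul_nonneg (Int.natCast_nonneg i) (ha2.trans_le ha3).le]
  have hkn : k ≤ (n : ℤ) + i := by
    by_contra! hkn
    nlinarith
  lift k to ℕ using hk
  refine ⟨k, by exact_mod_cast hkn, k * a2 - i * a3, by linarith, by linarith, ?_, ?_⟩ <;>
    simp only [thrStr, thrEnd] <;> linarith

lemma ThrCoversThr.lt_of_ne {a2 a3 : ℤ} {n e e' i i' : ℕ} (ha2 : 1 < a2) (ha3 : a2 < a3)
    (hcov : ThrCoversThr a2 a3 n e' i' e i) (hne : (e', i') ≠ (e, i)) : i' < i ∧ e' < e := by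
  obtain ⟨hstr, hend⟩ := hcov
  simp only [thrEnd, thrStr] at hstr hend
  set S : ℤ := e - e'
  set J : ℤ := i - i'
  have h1 : J * a3 ≤ S * a2 := by linarith
  have h2 : S * (a2 - 1) ≤ J * (a3 - 1) := by linarith
  have hJ0 : 0 ≤ J := by nlinarith [mul_le_mul_of_nonneg_right h1 (by linarith : (0 : ℤ) ≤ a2 - 1),
    mul_le_mul_of_nonneg_right h2 (by linarith : (0 : ℤ) ≤ a2)]
  have hJ1 : 0 < J := by
    refine hJ0.lt_of_ne fun hJ0 => hne ?_
    rw [← hJ0] at h1 h2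
    have : S = 0 := by nlinarith
    simp only [Prod.mk.injEq]
    omega
  have hS1 : 0 < S := by nlinarith
  omega

lemma HasGen.of_thrCoversThr_s11 {a2 a3 y : ℤ} {n m q e' i' S J : ℕ} (ha2 : 0 < a2)
    (hcov : ThrCoversThr a2 a3 n e' i' (e' + S) (i' + J))
    (hS : (S : ℤ) * a2 ≤ y + ((q + J : ℕ) : ℤ) * a3) (h : HasGen a2 a3 m (q + J) y) :
    HasGen a2 a3 m q y := by
  obtain ⟨hstr, hend⟩ := hcov
  obtain ⟨c1, c2, heq, hle⟩ := h
  simp only [thrEnd, thrStr] at hstr hend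
  push_cast at hstr hend hS heq hle
  have hgreedy := ediv_add_emod_le_add (c2 := (c2 : ℤ)) ha2 c1.cast_nonneg
  rw [← heq] at hgreedy
  set z := y + ((q : ℤ) + J) * a3
  have hdiv := Int.mul_ediv_add_emod z a2
  have hr : 0 ≤ z % a2 := Int.emod_nonneg z ha2.ne'
  have hSz : (S : ℤ) ≤ z / a2 := (Int.le_ediv_iff_mul_le ha2).mpr hS
  exact hasGen_of_int_coeffs (c1 := z % a2 + (S * a2 - J * a3)) (c2 := z / a2 - S)
    (by linarith) (by linarith) (by linarith) (by linarith)

lemma exists_hasGen_lt_of_thrCoversThr {a2 a3 y : ℤ} {m n e e' i i' Q : ℕ} (ha2 : 1 < a2)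
    (ha3 : a2 < a3) (hy : 0 ≤ y) (happ : ThrAppears a2 a3 n e i)
    (hcov : ThrCoversThr a2 a3 n e' i' e i) (hne : (e', i') ≠ (e, i)) (hiQ : i < Q)
    (h : HasGen a2 a3 m Q y) : ∃ q < Q, HasGen a2 a3 m q y := by
  obtain ⟨hi, he⟩ := hcov.lt_of_ne ha2 ha3 hne
  obtain ⟨S, rfl⟩ := Nat.exists_eq_add_of_le he.le
  obtain ⟨J, rfl⟩ := Nat.exists_eq_add_of_le hi.le
  obtain ⟨q, rfl⟩ : ∃ q, Q = q + J := ⟨Q - J, by omega⟩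
  refine ⟨q, by omega, h.of_thrCoversThr_s11 (by linarith) hcov ?_⟩
  obtain ⟨-, x, -, hx, hstr, -⟩ := happ
  have hiQ' : ((i' + J : ℕ) : ℤ) + 1 ≤ ((q + J : ℕ) : ℤ) := by exact_mod_cast hiQ
  simp only [thrStr] at hstr
  push_cast at hstr hiQ' ⊢
  nlinarith

lemma exists_hasBreakOrder {a2 a3 y : ℤ} {n i : ℕ} (h : HasGen a2 a3 (n - 1) i y) :
    ∃ q, HasBreakOrder a2 a3 n y q := by
  classical
  have hex : ∃ q, HasGen a2 a3 (n - 1) q y := ⟨i, h⟩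
  exact ⟨Nat.find hex, Nat.find_spec hex, fun _ => Nat.find_min hex⟩

/-- Lemma 7: a stride generator is canonical if no thread of order `p+1` appears in the
diagram, or some thread of order `p+1` appearing is covered by a distinct appearing thread. -/
theorem stmt11 (a2 a3 : ℤ) (ha2 : 1 < a2) (ha3 : a2 < a3)
    (n p : ℕ) (hsg : IsSG a2 a3 n p)
    (hyp : (∀ e : ℕ, ¬ ThrAppears a2 a3 n e (p + 1)) ∨
      (∃ e : ℕ, ThrAppears a2 a3 n e (p + 1) ∧
        ∃ e' i' : ℕ, ThrAppears a2 a3 n e' i' ∧ (e', i') ≠ (e, p + 1) ∧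
          ThrCoversThr a2 a3 n e' i' e (p + 1))) :
    IsCanonicalSG a2 a3 n p := by
  refine ⟨hsg, ?_⟩
  rintro y ⟨hy, -, hbrk⟩ i hgen
  obtain ⟨q, hq, hqmin⟩ := exists_hasBreakOrder hgen
  have hpq : p + 1 < q := lt_of_not_ge fun hqp => hbrk q hqp hq
  rcases hyp with hnone | ⟨e, happ, e', i', -, hne, hcov⟩
  · have hmul := hq.order_mul_le ha2.le ha3.le hy hpq.le
    have hn : ((n - 1 : ℕ) : ℤ) ≤ n := by exact_mod_cast n.sub_le 1
    obtain ⟨e, he⟩ := exists_thrAppears_of_mul_le (n := n) (by linarith) ha3.le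
      (hmul.trans (by gcongr))
    exact hnone e he
  · obtain ⟨q', hq', hgen'⟩ :=
      exists_hasGen_lt_of_thrCoversThr ha2 ha3 hy happ hcov hne hpq hq
    exact hqmin q' hq' hgen'
end

section
/- If SG(A, n, p) is a canonical stride generator, then for no n' < n and no p' is SG(A, n', p') a stride generator. -/
theorem HasGen.mono {a2 a3 : ℤ} {n m i : ℕ} {x : ℤ} (hnm : n ≤ m) :
    HasGen a2 a3 n i x → HasGen a2 a3 m i x := fun ⟨c1, c2, heq, hle⟩ =>
  ⟨c1, c2, heq, hle.trans (Nat.add_le_add_right hnm i)⟩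

theorem IsCanonicalSG.exists_canonicalBreak {a2 a3 : ℤ} {n p : ℕ}
    (hc : IsCanonicalSG a2 a3 n p) :
    ∃ y : ℤ, 0 ≤ y ∧ y < a3 ∧ IsCanonicalBreak a2 a3 n y := by
  obtain ⟨⟨_, _, y, hy0, hya3, hy⟩, hcanonical⟩ := hc
  exact ⟨y, hy0, hya3, hcanonical y ⟨hy0, hya3, hy⟩⟩

theorem stmt16_general (a2 a3 : ℤ)
    (n p : ℕ) (hc : IsCanonicalSG a2 a3 n p) :
    ∀ n' : ℕ, n' < n → ∀ p' : ℕ, ¬ IsSG a2 a3 n' p' := by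
  intro n' hn' p' hsg
  obtain ⟨y, hy0, hya3, hy⟩ := hc.exists_canonicalBreak
  obtain ⟨i, -, hgen⟩ := hsg.1 y hy0 hya3
  exact hy i (hgen.mono (Nat.le_sub_one_of_lt hn'))

/-- Lemma 13: if `SG(A, n, p)` is a canonical stride generator, then no stride generator
`SG(A, n', p')` exists for `n' < n`. -/
theorem stmt16 (a2 a3 : ℤ) (ha2 : 1 < a2) (ha3 : a2 < a3)
    (n p : ℕ) (hc : IsCanonicalSG a2 a3 n p) :
    ∀ n' : ℕ, n' < n → ∀ p' : ℕ, ¬ IsSG a2 a3 n' p' :=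
  stmt16_general a2 a3 n p hc
end

section
/- If SG(A, n, p) is a fundamental stride generator with p ≤ 1 (that is, of order 0 or 1), then SG(A, n, p) is canonical. Equivalently, every non-canonical fundamental stride generator has order p ≥ 2. -/
def minCoins (a t : ℤ) : ℤ := t / a + t % a

section minCoins

variable {a t k r : ℤ}

lemma ediv_emod_eq_of_eq_mul_add (ht : t = k * a + r) (hr0 : 0 ≤ r) (hra : r < a) :
    t / a = k ∧ t % a = r :=
  (Int.ediv_emod_unique (by omega)).2 ⟨by rw [ht]; ring, hr0, hra⟩

lemma minCoins_eq_of_eq_mul_add (ht : t = k * a + r) (hr0 : 0 ≤ r) (hra : r < a) :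
    minCoins a t = k + r := by
  obtain ⟨hq, hr⟩ := ediv_emod_eq_of_eq_mul_add ht hr0 hra
  rw [minCoins, hq, hr]

lemma minCoins_le_of_eq_mul_add (ha : 0 < a) (hr : 0 ≤ r) (ht : t = k * a + r) :
    minCoins a t ≤ k + r := by
  have hq : t / a = k + r / a := by
    rw [ht, add_comm, Int.add_mul_ediv_right _ _ ha.ne', add_comm]
  have hm : t % a = r % a := by rw [ht, add_comm, Int.add_mul_emod_self_right]
  have hr' : a * (r / a) + r % a = r := Int.mul_ediv_add_emod r a
  have : r / a ≤ a * (r / a) := le_mul_of_one_le_left (Int.ediv_nonneg hr ha.le) ha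
  rw [minCoins, hq, hm]
  linarith

end minCoins

lemma hasGen_iff {a2 a3 x : ℤ} {m i : ℕ} (ha2 : 0 < a2) :
    HasGen a2 a3 m i x ↔ 0 ≤ x + i * a3 ∧ minCoins a2 (x + i * a3) ≤ m + i := by
  constructor
  · rintro ⟨c1, c2, ht, hc⟩
    refine ⟨by rw [ht]; positivity, ?_⟩
    have := minCoins_le_of_eq_mul_add ha2 (Int.natCast_nonneg c1) ht
    omega
  · rintro ⟨ht, hμ⟩
    set t := x + i * a3
    have hq := Int.ediv_nonneg ht ha2.le
    have hr := Int.emod_nonneg t ha2.ne'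
    refine ⟨(t % a2).toNat, (t / a2).toNat, ?_, ?_⟩
    · rw [Int.toNat_of_nonneg hq, Int.toNat_of_nonneg hr]
      linarith [Int.mul_ediv_add_emod t a2]
    · rw [minCoins] at hμ
      omega

section Stride

variable {a2 a3 α β : ℤ}

lemma minCoins_add_stride_of_lt (ha2 : 0 < a2) (h3 : a3 = α * a2 + β) (hβ : 0 ≤ β) {t : ℤ}
    (h : t % a2 + β < a2) :
    (t + a3) % a2 = t % a2 + β ∧ minCoins a2 (t + a3) = minCoins a2 t + α + β := by
  have ht : t + a3 = (t / a2 + α) * a2 + (t % a2 + β) := by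
    linear_combination h3 - Int.mul_ediv_add_emod t a2
  obtain ⟨hq, hr⟩ := ediv_emod_eq_of_eq_mul_add ht (by linarith [Int.emod_nonneg t ha2.ne']) h
  refine ⟨hr, ?_⟩
  rw [minCoins, minCoins, hq, hr]
  ring

lemma minCoins_add_stride_of_le (ha2 : 0 < a2) (h3 : a3 = α * a2 + β) (hβ : β < a2) {t : ℤ}
    (h : a2 ≤ t % a2 + β) :
    (t + a3) % a2 = t % a2 + β - a2 ∧
      minCoins a2 (t + a3) = minCoins a2 t + α + β + 1 - a2 := by
  have ht : t + a3 = (t / a2 + α + 1) * a2 + (t % a2 + β - a2) := by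
    linear_combination h3 - Int.mul_ediv_add_emod t a2
  obtain ⟨hq, hr⟩ :=
    ediv_emod_eq_of_eq_mul_add ht (by linarith) (by linarith [Int.emod_lt_of_pos t ha2])
  refine ⟨hr, ?_⟩
  rw [minCoins, minCoins, hq, hr]
  ring

end Stride

lemma ediv_le_of_lt_mul_add {a y α β : ℤ} (ha : 0 < a) (hβ : β ≤ a) (hy : y < α * a + β) :
    y / a ≤ α :=
  Int.lt_add_one_iff.1 ((Int.ediv_lt_iff_lt_mul ha).2 (by linarith))

lemma ediv_lt_of_lt_mul_add {a y α β : ℤ} (ha : 0 < a) (hβ : β ≤ y % a)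
    (hy : y < α * a + β) : y / a < α := by
  have := Int.mul_ediv_add_emod y a
  have : y / a * a < α * a := by linarith
  exact lt_of_mul_lt_mul_right this ha.le

section Orbit

variable {a2 a3 α β N y : ℤ}

lemma add_le_minCoins_add_mul_of_forall (hstep : ∀ t, minCoins a2 t + 1 ≤ minCoins a2 (t + a3))
    (hy : N ≤ minCoins a2 y) (i : ℕ) : N + i ≤ minCoins a2 (y + i * a3) := by
  induction i with
  | zero => simpa using hy
  | succ i ih =>
    rw [Nat.cast_succ, add_one_mul, ← add_assoc y]
    linarith [hstep (y + i * a3)]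

lemma minCoins_add_one_le_add_stride (ha2 : 0 < a2) (h3 : a3 = α * a2 + β) (hα : 1 ≤ α)
    (hβ0 : 0 ≤ β) (hβ : β < a2) (hnd : β = 0 ∨ a2 ≤ α + β) (t : ℤ) :
    minCoins a2 t + 1 ≤ minCoins a2 (t + a3) := by
  rcases lt_or_ge (t % a2 + β) a2 with h | h
  · linarith [(minCoins_add_stride_of_lt ha2 h3 hβ0 h).2]
  · have := (minCoins_add_stride_of_le ha2 h3 hβ h).2
    have := Int.emod_lt_of_pos t ha2
    omega

lemma add_le_minCoins_add_mul_of_carry_invariant (ha2 : 0 < a2) (h3 : a3 = α * a2 + β)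
    (hβ0 : 0 ≤ β) (hβ : β < a2) (hC1 : 2 * β ≤ a2) (hC2 : a2 + 1 ≤ 2 * (α + β))
    (hy : N ≤ minCoins a2 y)
    (hcarry : a2 ≤ y % a2 + β → N + (a2 - α - β) ≤ minCoins a2 y) (i : ℕ) :
    N + i ≤ minCoins a2 (y + i * a3) := by
  suffices h : ∀ i : ℕ, N + i ≤ minCoins a2 (y + i * a3) ∧
      (a2 ≤ (y + i * a3) % a2 + β → N + i + (a2 - α - β) ≤ minCoins a2 (y + i * a3)) from
    (h i).1
  intro i
  induction i with
  | zero => simpa using ⟨hy, hcarry⟩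
  | succ i ih =>
    rw [Nat.cast_succ, add_one_mul, ← add_assoc y]
    rcases lt_or_ge ((y + i * a3) % a2 + β) a2 with h | h
    · have := (minCoins_add_stride_of_lt ha2 h3 hβ0 h).2
      exact ⟨by linarith [ih.1], fun _ => by linarith [ih.1]⟩
    · obtain ⟨hr, hμ⟩ := minCoins_add_stride_of_le ha2 h3 hβ h
      have := ih.2 h
      have := Int.emod_lt_of_pos (y + i * a3) ha2
      exact ⟨by linarith, fun h' => by omega⟩

lemma false_of_degenerate_of_order_zero (ha2 : 0 < a2) (h3 : a3 = α * a2 + β) (hα : 1 ≤ α)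
    (hβ : 1 ≤ β) (hD : α + β < a2) (hA : ∀ x, 0 ≤ x → x < a3 → minCoins a2 x ≤ N)
    (hy : y < a3) (hb0 : N ≤ minCoins a2 y) (hb1 : N + 1 ≤ minCoins a2 (y + a3)) :
    False := by
  have hx := hA ((α - 1) * a2 + (a2 - 1)) (by nlinarith) (by nlinarith)
  rw [minCoins_eq_of_eq_mul_add rfl (by omega) (by omega)] at hx
  have hμy : minCoins a2 y = y / a2 + y % a2 := rfl
  have := Int.emod_lt_of_pos y ha2
  rcases lt_or_ge (y % a2) β with hr | hr
  · have := ediv_le_of_lt_mul_add ha2 (by omega) (h3 ▸ hy)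
    omega
  · have := ediv_lt_of_lt_mul_add ha2 hr (h3 ▸ hy)
    have := (minCoins_add_stride_of_le ha2 h3 (by omega) (show a2 ≤ y % a2 + β by omega)).2
    omega

lemma carry_invariant_of_degenerate_of_order_one (ha2 : 0 < a2) (h3 : a3 = α * a2 + β)
    (hα : 1 ≤ α) (hβ : 1 ≤ β) (hD : α + β < a2)
    (hA : ∀ x, 0 ≤ x → x < a3 → minCoins a2 x ≤ N ∨ minCoins a2 (x + a3) ≤ N + 1)
    (hy : y < a3) (hb0 : N ≤ minCoins a2 y) (hb1 : N + 1 ≤ minCoins a2 (y + a3))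
    (hb2 : N + 2 ≤ minCoins a2 (y + a3 + a3)) :
    2 * β ≤ a2 ∧ a2 + 1 ≤ 2 * (α + β) ∧
      (a2 ≤ y % a2 + β → N + (a2 - α - β) ≤ minCoins a2 y) := by
  have hx1 : 2 * α + β - 2 ≤ N := by
    have hx := hA ((α - 1) * a2 + (a2 - 1)) (by nlinarith) (by nlinarith)
    rw [minCoins_eq_of_eq_mul_add rfl (by omega) (by omega),
      minCoins_eq_of_eq_mul_add (k := 2 * α) (r := β - 1) (by linear_combination h3)
        (by omega) (by omega)] at hx
    omega
  have hx2 : 2 * β + 1 ≤ a2 → α + a2 - β - 2 ≤ N := by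
    intro h
    have hx := hA ((α - 1) * a2 + (a2 - β - 1)) (by nlinarith) (by nlinarith)
    rw [minCoins_eq_of_eq_mul_add rfl (by omega) (by omega),
      minCoins_eq_of_eq_mul_add (k := 2 * α - 1) (r := a2 - 1) (by linear_combination h3)
        (by omega) (by omega)] at hx
    omega
  have hμy : minCoins a2 y = y / a2 + y % a2 := rfl
  have := Int.emod_lt_of_pos y ha2
  have := ediv_le_of_lt_mul_add ha2 (by omega) (h3 ▸ hy)
  have := fun hr => ediv_lt_of_lt_mul_add ha2 hr (h3 ▸ hy)
  rcases lt_or_ge (y % a2 + β) a2 with h0 | h0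
  · obtain ⟨hr1, hμ1⟩ := minCoins_add_stride_of_lt ha2 h3 (by omega) h0
    rcases lt_or_ge ((y + a3) % a2 + β) a2 with h1 | h1
    · have := (minCoins_add_stride_of_lt ha2 h3 (by omega) h1).2
      omega
    · have := (minCoins_add_stride_of_le ha2 h3 (by omega) h1).2
      omega
  · obtain ⟨hr1, hμ1⟩ := minCoins_add_stride_of_le ha2 h3 (by omega) h0
    rcases lt_or_ge ((y + a3) % a2 + β) a2 with h1 | h1
    · have := (minCoins_add_stride_of_lt ha2 h3 (by omega) h1).2
      omega
    · have := (minCoins_add_stride_of_le ha2 h3 (by omega) h1).2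
      omega

end Orbit

lemma add_le_minCoins_add_mul_of_order_le_one {a2 a3 N y : ℤ} {p : ℕ} (ha2 : 1 < a2)
    (ha3 : a2 < a3) (hp : p ≤ 1)
    (hA : ∀ x, 0 ≤ x → x < a3 → ∃ j ≤ p, minCoins a2 (x + j * a3) ≤ N + j)
    (hy : y < a3) (hb : ∀ j ≤ p + 1, N + j ≤ minCoins a2 (y + j * a3)) (i : ℕ) :
    N + i ≤ minCoins a2 (y + i * a3) := by
  have ha2' : 0 < a2 := by omega
  have h3 : a3 = a3 / a2 * a2 + a3 % a2 := by linarith [Int.mul_ediv_add_emod a3 a2]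
  have hα : 1 ≤ a3 / a2 := (Int.le_ediv_iff_mul_le ha2').2 (by omega)
  have hβ0 := Int.emod_nonneg a3 ha2'.ne'
  have hβ := Int.emod_lt_of_pos a3 ha2'
  have hb0 : N ≤ minCoins a2 y := by simpa using hb 0 (by omega)
  have hb1 : N + 1 ≤ minCoins a2 (y + a3) := by simpa using hb 1 (by omega)
  by_cases hnd : a3 % a2 = 0 ∨ a2 ≤ a3 / a2 + a3 % a2
  · exact add_le_minCoins_add_mul_of_forall
      (minCoins_add_one_le_add_stride ha2' h3 hα hβ0 hβ hnd) hb0 i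
  simp only [not_or, not_le] at hnd
  interval_cases p
  · refine (false_of_degenerate_of_order_zero ha2' h3 hα (by omega) hnd.2 (fun x hx0 hx => ?_)
      hy hb0 hb1).elim
    obtain ⟨j, hj, hx⟩ := hA x hx0 hx
    obtain rfl : j = 0 := by omega
    simpa using hx
  · have hb2 : N + 2 ≤ minCoins a2 (y + a3 + a3) := by
      convert hb 2 le_rfl using 2; push_cast; ring
    have hA1 : ∀ x, 0 ≤ x → x < a3 →
        minCoins a2 x ≤ N ∨ minCoins a2 (x + a3) ≤ N + 1 := by
      intro x hx0 hx
      obtain ⟨j, hj, hx⟩ := hA x hx0 hx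
      interval_cases j
      · exact Or.inl (by simpa using hx)
      · exact Or.inr (by simpa using hx)
    obtain ⟨hC1, hC2, hcarry⟩ := carry_invariant_of_degenerate_of_order_one ha2' h3 hα
      (by omega) hnd.2 hA1 hy hb0 hb1 hb2
    exact add_le_minCoins_add_mul_of_carry_invariant ha2' h3 hβ0 hβ hC1 hC2 hb0 hcarry i

lemma isCanonicalBreak_of_isBreak {a2 a3 y : ℤ} {n p : ℕ} (ha2 : 1 < a2) (ha3 : a2 < a3)
    (hp : p ≤ 1) (hA : ∀ x : ℤ, 0 ≤ x → x < a3 → ∃ i ≤ p, HasGen a2 a3 n i x)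
    (hy : IsBreak a2 a3 n p y) : IsCanonicalBreak a2 a3 n y := by
  obtain ⟨hy0, hya3, hbr⟩ := hy
  have ha2' : 0 < a2 := by omega
  have hA' : ∀ x, 0 ≤ x → x < a3 →
      ∃ j ≤ p, minCoins a2 (x + j * a3) ≤ ((n - 1 : ℕ) : ℤ) + 1 + j := by
    intro x hx0 hx
    obtain ⟨j, hj, hgen⟩ := hA x hx0 hx
    exact ⟨j, hj, by have := ((hasGen_iff ha2').1 hgen).2; omega⟩
  have hb : ∀ j ≤ p + 1, ((n - 1 : ℕ) : ℤ) + 1 + j ≤ minCoins a2 (y + j * a3) := by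
    intro j hj
    by_contra h
    have : 0 ≤ y + j * a3 := add_nonneg hy0 (mul_nonneg j.cast_nonneg (by omega))
    exact hbr j hj ((hasGen_iff ha2').2 ⟨this, by omega⟩)
  intro i hgen
  have := ((hasGen_iff ha2').1 hgen).2
  have := add_le_minCoins_add_mul_of_order_le_one ha2 ha3 hp hA' hya3 hb i
  omega

/-- Lemma 14 (first part): a fundamental stride generator of order 0 or 1 is canonical;
equivalently, every non-canonical fundamental stride generator has order `p ≥ 2`. -/
theorem stmt17 (a2 a3 : ℤ) (ha2 : 1 < a2) (ha3 : a2 < a3)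
    (n p : ℕ) (hf : IsFundamentalSG a2 a3 n p) (hp : p ≤ 1) :
    IsCanonicalSG a2 a3 n p :=
  ⟨hf.1, fun _ hy => isCanonicalBreak_of_isBreak ha2 ha3 hp hf.1.1 hy⟩
end

section
/- Write a_3 = C_2*a_2 + C_1 with 0 ≤ C_1 < a_2. If SG(A, n, p) is a fundamental stride generator and either C_1 = 0 or a_2 − C_2 ≤ C_1 < a_2, then p = 0. -/
/-- For `v ≥ 0`, the least `c1 + c2` with `v = c2 * a + c1`, `c1 c2 : ℕ`: it is attained by the
greedy choice `c2 = v / a`, `c1 = v % a`. -/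
def greedyWeight (a v : ℤ) : ℤ := v / a + v % a

theorem greedyWeight_le {a : ℤ} (ha : 0 < a) (c1 c2 : ℕ) :
    greedyWeight a (c2 * a + c1) ≤ c1 + c2 := by
  have hdiv : (c2 * a + c1 : ℤ) / a = c2 + c1 / a := by
    rw [add_comm, Int.add_mul_ediv_right _ _ ha.ne', add_comm]
  have hmod : (c2 * a + c1 : ℤ) % a = c1 % a := by
    rw [add_comm, Int.add_mul_emod_self_right]
  have hc1 : (c1 : ℤ) / a ≤ a * ((c1 : ℤ) / a) :=
    le_mul_of_one_le_left (Int.ediv_nonneg c1.cast_nonneg ha.le) ha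
  have := Int.mul_ediv_add_emod (c1 : ℤ) a
  unfold greedyWeight
  omega

theorem hasGen_iff_greedyWeight {a2 a3 : ℤ} (ha2 : 0 < a2) {n i : ℕ} {x : ℤ} :
    HasGen a2 a3 n i x ↔
      0 ≤ x + i * a3 ∧ greedyWeight a2 (x + i * a3) ≤ n + i := by
  constructor
  · rintro ⟨c1, c2, hv, hc⟩
    refine ⟨hv ▸ by positivity, ?_⟩
    have := greedyWeight_le ha2 c1 c2
    rw [← hv] at this
    omega
  · rintro ⟨hv, hw⟩
    have hq := Int.ediv_nonneg hv ha2.le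
    have hr := Int.emod_nonneg (x + i * a3) ha2.ne'
    refine ⟨((x + i * a3) % a2).toNat, ((x + i * a3) / a2).toNat, ?_, ?_⟩
    · rw [Int.toNat_of_nonneg hq, Int.toNat_of_nonneg hr]
      exact (Int.ediv_mul_add_emod _ _).symm
    · unfold greedyWeight at hw
      omega

/-- Subtract `a3 = C2 * a2 + C1` digit by digit. A borrow (when `v % a2 < C1`, so `C1 ≠ 0`) changes
the weight by `a2 - C1 - C2 - 1`, which is negative exactly when `a2 - C2 ≤ C1`. -/
theorem greedyWeight_sub_lt {a2 a3 C2 C1 : ℤ} (ha2 : 0 < a2) (ha3 : 0 < a3)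
    (hC : a3 = C2 * a2 + C1) (hC1 : 0 ≤ C1) (hC1' : C1 < a2) (hyp : C1 = 0 ∨ a2 - C2 ≤ C1)
    (v : ℤ) :
    greedyWeight a2 (v - a3) < greedyWeight a2 v := by
  have hC1C2 : 1 ≤ C1 + C2 := by
    by_contra! h
    nlinarith
  have hv' := Int.mul_ediv_add_emod v a2
  have hr := Int.emod_nonneg v ha2.ne'
  have hr' := Int.emod_lt_of_pos v ha2
  unfold greedyWeight
  by_cases hrC : C1 ≤ v % a2
  · obtain ⟨hq, hr⟩ := (Int.ediv_emod_unique ha2 (a := v - a3) (q := v / a2 - C2)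
      (r := v % a2 - C1)).2 ⟨by rw [hC]; linarith, by omega, by omega⟩
    omega
  · obtain ⟨hq, hr⟩ := (Int.ediv_emod_unique ha2 (a := v - a3) (q := v / a2 - C2 - 1)
      (r := v % a2 - C1 + a2)).2 ⟨by rw [hC]; linarith, by omega, by omega⟩
    omega

theorem HasGen.of_succ {a2 a3 C2 C1 : ℤ} (ha2 : 0 < a2) (ha3 : 0 < a3)
    (hC : a3 = C2 * a2 + C1) (hC1 : 0 ≤ C1) (hC1' : C1 < a2) (hyp : C1 = 0 ∨ a2 - C2 ≤ C1)
    {n i : ℕ} {x : ℤ} (hx : 0 ≤ x) (h : HasGen a2 a3 n (i + 1) x) : HasGen a2 a3 n i x := by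
  rw [hasGen_iff_greedyWeight ha2] at h ⊢
  obtain ⟨-, hw⟩ := h
  push_cast at hw
  have hlt := greedyWeight_sub_lt ha2 ha3 hC hC1 hC1' hyp (x + (i + 1) * a3)
  rw [show x + (i + 1) * a3 - a3 = x + i * a3 by ring] at hlt
  exact ⟨by positivity, by omega⟩

theorem HasGen.order_zero {a2 a3 C2 C1 : ℤ} (ha2 : 0 < a2) (ha3 : 0 < a3)
    (hC : a3 = C2 * a2 + C1) (hC1 : 0 ≤ C1) (hC1' : C1 < a2) (hyp : C1 = 0 ∨ a2 - C2 ≤ C1)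
    {n i : ℕ} {x : ℤ} (hx : 0 ≤ x) (h : HasGen a2 a3 n i x) : HasGen a2 a3 n 0 x := by
  induction i with
  | zero => exact h
  | succ i ih => exact ih (h.of_succ ha2 ha3 hC hC1 hC1' hyp hx)

/-- Lemma 15: if `a2 - C2 ≤ C1 < a2` or `C1 = 0`, then the fundamental stride generator for
`A` is of order 0. -/
theorem stmt18 (a2 a3 : ℤ) (ha2 : 1 < a2) (ha3 : a2 < a3)
    (C2 C1 : ℤ) (hC : a3 = C2 * a2 + C1) (hC1 : 0 ≤ C1) (hC1' : C1 < a2)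
    (n p : ℕ) (hf : IsFundamentalSG a2 a3 n p)
    (hyp : C1 = 0 ∨ a2 - C2 ≤ C1) :
    p = 0 := by
  obtain ⟨⟨hcover, ⟨x, hx0, hxa3, hnot⟩, -⟩, -⟩ := hf
  by_contra hp
  obtain ⟨i, -, hgen⟩ := hcover x hx0 hxa3
  exact hnot 0 (Nat.pos_of_ne_zero hp)
    (hgen.order_zero (by omega) (by omega) hC hC1 hC1' hyp hx0)
end

section
/- Write a_3 = C_2*a_2 + C_1 with 0 ≤ C_1 < a_2. If SG(A, n, p) is a fundamental stride generator and a_2 − 2*C_2 + 1 ≤ 2*C_1 ≤ a_2, then p ≤ 1 (the fundamental stride generator is of order 0 or 1). -/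
/-!
Write `F(v) = v / a2 + v % a2`; an integer `x ≥ 0` has an `n`-generation of order `i` exactly
when `F(x + i a3) ≤ n + i`. Adding `a3 = C2 a2 + C1` to `v` raises `F` by `C1 + C2`, or by
`C1 + C2 + 1 - a2` when the residue wraps around. Since `2 C1 ≤ a2`, a wrap leaves a residue
below `C1`, so two consecutive steps wrap at most once and raise `F` by at least
`2 (C1 + C2) + 1 - a2 ≥ 2`. Hence a generation of order `i + 2` yields one of order `i`, which
is impossible for the element of condition (B) when `p ≥ 2`, as its least order is `p`.
-/

def divModSum (m v : ℤ) : ℤ := v / m + v % m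

lemma divModSum_le_of_eq {m v c1 c2 : ℤ} (hm : 0 < m) (hv : v = c2 * m + c1)
    (hc1 : 0 ≤ c1) : divModSum m v ≤ c1 + c2 := by
  have hqr := Int.mul_ediv_add_emod v m
  have hr := Int.emod_lt_of_pos v hm
  have hq : c2 ≤ v / m := by
    by_contra! h
    nlinarith
  unfold divModSum
  nlinarith

lemma hasGen_iff_divModSum_le {a2 a3 x : ℤ} (ha2 : 0 < a2) (n i : ℕ)
    (hv : 0 ≤ x + i * a3) :
    HasGen a2 a3 n i x ↔ divModSum a2 (x + i * a3) ≤ n + i := by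
  constructor
  · rintro ⟨c1, c2, heq, hle⟩
    calc divModSum a2 (x + i * a3) ≤ c1 + c2 :=
          divModSum_le_of_eq ha2 heq c1.cast_nonneg
      _ ≤ n + i := by exact_mod_cast hle
  · intro h
    have hq := Int.ediv_nonneg hv ha2.le
    have hr := Int.emod_nonneg (x + i * a3) ha2.ne'
    refine ⟨((x + i * a3) % a2).toNat, ((x + i * a3) / a2).toNat, ?_, ?_⟩
    · rw [Int.toNat_of_nonneg hq, Int.toNat_of_nonneg hr]
      linarith [Int.mul_ediv_add_emod (x + i * a3) a2]
    · unfold divModSum at h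
      omega

section Step

variable {m q c : ℤ}

lemma divModSum_add_of_emod_add_lt (hm : 0 < m) (hc : 0 ≤ c) {v : ℤ} (h : v % m + c < m) :
    (v + (q * m + c)) % m = v % m + c ∧
      divModSum m (v + (q * m + c)) = divModSum m v + q + c := by
  have hqr := Int.mul_ediv_add_emod v m
  have hr := Int.emod_nonneg v hm.ne'
  obtain ⟨hdiv, hmod⟩ :=
    (Int.ediv_emod_unique (a := v + (q * m + c)) (r := v % m + c) (q := v / m + q) hm).2
    ⟨by linear_combination hqr, by linarith, h⟩
  refine ⟨hmod, ?_⟩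
  unfold divModSum
  rw [hdiv, hmod]
  ring

lemma divModSum_add_of_le_emod_add (hm : 0 < m) (hcm : c < m) {v : ℤ} (h : m ≤ v % m + c) :
    (v + (q * m + c)) % m = v % m + c - m ∧
      divModSum m (v + (q * m + c)) = divModSum m v + q + c + 1 - m := by
  have hqr := Int.mul_ediv_add_emod v m
  have hr := Int.emod_lt_of_pos v hm
  obtain ⟨hdiv, hmod⟩ :=
    (Int.ediv_emod_unique (a := v + (q * m + c)) (r := v % m + c - m) (q := v / m + q + 1) hm).2
      ⟨by linear_combination hqr, by linarith, by linarith⟩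
  refine ⟨hmod, ?_⟩
  unfold divModSum
  rw [hdiv, hmod]
  ring

lemma divModSum_add_add_ge (hm : 0 < m) (hc : 0 ≤ c) (hcm : 2 * c ≤ m) (v : ℤ) :
    divModSum m v + 2 * (q + c) + 1 - m ≤ divModSum m (v + (q * m + c) + (q * m + c)) := by
  have hc' : c < m := by linarith
  rcases lt_or_ge (v % m + c) m with hv | hv
  · obtain ⟨-, hF⟩ := divModSum_add_of_emod_add_lt (q := q) hm hc hv
    rcases lt_or_ge ((v + (q * m + c)) % m + c) m with hw | hw
    · linarith [(divModSum_add_of_emod_add_lt (q := q) hm hc hw).2]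
    · linarith [(divModSum_add_of_le_emod_add (q := q) hm hc' hw).2]
  · obtain ⟨hr, hF⟩ := divModSum_add_of_le_emod_add (q := q) hm hc' hv
    -- after a wrap the residue is below `c`, so the second step cannot wrap as well
    have hw : (v + (q * m + c)) % m + c < m := by linarith [Int.emod_lt_of_pos v hm]
    linarith [(divModSum_add_of_emod_add_lt (q := q) hm hc hw).2]

end Step

lemma hasGen_of_hasGen_add_two {a2 a3 C2 C1 x : ℤ} (ha2 : 0 < a2) (ha3 : 0 ≤ a3)
    (hC : a3 = C2 * a2 + C1) (hC1 : 0 ≤ C1) (hlo : a2 - 2 * C2 + 1 ≤ 2 * C1)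
    (hhi : 2 * C1 ≤ a2) (hx : 0 ≤ x) {n i : ℕ} (hgen : HasGen a2 a3 n (i + 2) x) :
    HasGen a2 a3 n i x := by
  have hv : 0 ≤ x + i * a3 := by positivity
  have hshift : x + ((i + 2 : ℕ) : ℤ) * a3 = x + i * a3 + a3 + a3 := by push_cast; ring
  have hle := (hasGen_iff_divModSum_le ha2 n (i + 2) (by rw [hshift]; linarith)).1 hgen
  rw [hshift] at hle
  have hstep := divModSum_add_add_ge (q := C2) ha2 hC1 hhi (x + i * a3)
  rw [← hC] at hstep
  refine (hasGen_iff_divModSum_le ha2 n i hv).2 ?_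
  push_cast at hle
  linarith

theorem stmt19_general (a2 a3 : ℤ) (ha2 : 1 < a2) (ha3 : a2 < a3)
    (C2 C1 : ℤ) (hC : a3 = C2 * a2 + C1) (hC1 : 0 ≤ C1)
    (n p : ℕ) (hf : IsFundamentalSG a2 a3 n p)
    (hlo : a2 - 2 * C2 + 1 ≤ 2 * C1) (hhi : 2 * C1 ≤ a2) :
    p ≤ 1 := by
  obtain ⟨⟨hcover, ⟨x, hx, hxa3, hminimal⟩, -⟩, -⟩ := hf
  by_contra! hp
  obtain ⟨j, hjp, hgen⟩ := hcover x hx hxa3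
  have hj : j = p := by
    by_contra hne
    exact hminimal j (by omega) hgen
  obtain ⟨i, rfl⟩ : ∃ i, p = i + 2 := ⟨p - 2, by omega⟩
  subst hj
  exact hminimal i (by omega)
    (hasGen_of_hasGen_add_two (by omega) (by omega) hC hC1 hlo hhi hx hgen)

/-- Lemma 16: if `a2 - 2*C2 + 1 ≤ 2*C1 ≤ a2`, then the fundamental stride generator for `A`
is of order 0 or 1. -/
theorem stmt19 (a2 a3 : ℤ) (ha2 : 1 < a2) (ha3 : a2 < a3)
    (C2 C1 : ℤ) (hC : a3 = C2 * a2 + C1) (hC1 : 0 ≤ C1) (hC1' : C1 < a2)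
    (n p : ℕ) (hf : IsFundamentalSG a2 a3 n p)
    (hlo : a2 - 2 * C2 + 1 ≤ 2 * C1) (hhi : 2 * C1 ≤ a2) :
    p ≤ 1 :=
  stmt19_general a2 a3 ha2 ha3 C2 C1 hC hC1 n p hf hlo hhi
end
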